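/- Surrogate decomposition: for any policies π̃, π with π(a|s) > 0 everywhere, (1−γ)(J(π̃) − J(π)) = [E_{s∼d_π̃, a∼π̃}[A_π(s,a)] − E_{s∼d_π, a∼π̃}[A_π(s,a)]] + E_{s∼d_π, a∼π}[(π̃(a|s)/π(a|s)) A_π(s,a)]. -/

import Mathlib

open scoped BigOperators

/-- State transition matrix induced by policy `π`: `(Pmat P π) s s' = ∑ a, π s a * P s a s'`. -/
noncomputable def Pmat {S A : Type*} [Fintype A] (P : S → A → S → ℝ) (π : S → A → ℝ) :
    Matrix S S ℝ := fun s s' => ∑ a, π s a * P s a s'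

/-- State distribution at time `t` when starting from `p0` and following `π`. -/
noncomputable def stateDist {S A : Type*} [Fintype S] [DecidableEq S] [Fintype A]
    (P : S → A → S → ℝ) (π : S → A → ℝ) (p0 : S → ℝ) (t : ℕ) : S → ℝ :=
  (((Pmat P π).transpose) ^ t).mulVec p0

/-- Discounted state distribution `d_π(s) = (1-γ) ∑ γ^t Pr(s_t = s)`. -/
noncomputable def dDist {S A : Type*} [Fintype S] [DecidableEq S] [Fintype A]
    (P : S → A → S → ℝ) (π : S → A → ℝ) (p0 : S → ℝ) (γ : ℝ) (s : S) : ℝ :=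
  (1 - γ) * ∑' t : ℕ, γ ^ t * stateDist P π p0 t s

/-- Expected discounted return `J(π)` with initial distribution `p0`. -/
noncomputable def Jret {S A : Type*} [Fintype S] [DecidableEq S] [Fintype A]
    (P : S → A → S → ℝ) (π : S → A → ℝ) (r : S → A → ℝ) (p0 : S → ℝ) (γ : ℝ) : ℝ :=
  ∑' t : ℕ, γ ^ t * ∑ s, stateDist P π p0 t s * ∑ a, π s a * r s a

/-- Value function `V_π(s)`: return starting deterministically from `s`. -/
noncomputable def Vval {S A : Type*} [Fintype S] [Fintype A] [DecidableEq S]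
    (P : S → A → S → ℝ) (π : S → A → ℝ) (r : S → A → ℝ) (γ : ℝ) (s : S) : ℝ :=
  Jret P π r (fun s' => if s' = s then 1 else 0) γ

/-- Action-value function `Q_π(s,a)`. -/
noncomputable def Qval {S A : Type*} [Fintype S] [Fintype A] [DecidableEq S]
    (P : S → A → S → ℝ) (π : S → A → ℝ) (r : S → A → ℝ) (γ : ℝ) (s : S) (a : A) : ℝ :=
  r s a + γ * ∑ s', P s a s' * Vval P π r γ s'

/-- Advantage function `A_π(s,a) = Q_π(s,a) - V_π(s)`. -/
noncomputable def Adv {S A : Type*} [Fintype S] [Fintype A] [DecidableEq S]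
    (P : S → A → S → ℝ) (π : S → A → ℝ) (r : S → A → ℝ) (γ : ℝ) (s : S) (a : A) : ℝ :=
  Qval P π r γ s a - Vval P π r γ s

/-!
The importance weight `π̃ / π` turns the last expectation into `E_{s∼d_π, a∼π̃}[A_π]`, which cancels
the subtracted term, so the identity is the performance difference lemma
`(1 - γ) (J(π̃) - J(π)) = E_{s∼d_π̃, a∼π̃}[A_π]`. For that, averaging `A_π(s, ·)` over `π̃` gives
`r_π̃ + γ P_π̃ V_π - V_π`; against the discounted state distribution of `π̃` the term
`γ P_π̃ V_π - V_π` telescopes to `-E_{p0}[V_π] = -J(π)`, while `r_π̃` contributes `J(π̃)`.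
All series converge because a row-stochastic matrix does not increase the sup norm.
-/

open Matrix Finset

section DiscountedChain

variable {n : Type*} [Fintype n] [DecidableEq n] {M : Matrix n n ℝ} {γ : ℝ}

theorem abs_mulVec_apply_le_of_mem_rowStochastic (hM : M ∈ rowStochastic ℝ n) (f : n → ℝ)
    (i : n) : |(M *ᵥ f) i| ≤ ‖f‖ :=
  calc |(M *ᵥ f) i| ≤ ∑ j, |M i j * f j| := abs_sum_le_sum_abs _ _
    _ ≤ ∑ j, M i j * ‖f‖ := by
      gcongr with j
      rw [abs_mul, abs_of_nonneg (nonneg_of_mem_rowStochastic hM)]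
      gcongr
      · exact nonneg_of_mem_rowStochastic hM
      · exact norm_le_pi_norm f j
    _ = ‖f‖ := by rw [← sum_mul, sum_row_of_mem_rowStochastic hM, one_mul]

theorem summable_discounted (hM : M ∈ rowStochastic ℝ n) (hγ0 : 0 ≤ γ) (hγ1 : γ < 1)
    (p f : n → ℝ) : Summable fun t : ℕ => γ ^ t * (p ᵥ* M ^ t ⬝ᵥ f) := by
  refine ((summable_geometric_of_lt_one hγ0 hγ1).mul_right ((∑ i, |p i|) * ‖f‖)).of_norm_bounded
    fun t => ?_
  have hpow := pow_mem hM t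
  rw [Real.norm_eq_abs, abs_mul, abs_of_nonneg (pow_nonneg hγ0 t), ← dotProduct_mulVec, sum_mul]
  gcongr
  calc |p ⬝ᵥ M ^ t *ᵥ f| ≤ ∑ i, |p i * (M ^ t *ᵥ f) i| := abs_sum_le_sum_abs _ _
    _ ≤ ∑ i, |p i| * ‖f‖ := by
      gcongr with i
      rw [abs_mul]
      exact mul_le_mul_of_nonneg_left (abs_mulVec_apply_le_of_mem_rowStochastic hpow f i)
        (abs_nonneg _)

theorem tsum_discounted_telescope (hM : M ∈ rowStochastic ℝ n) (hγ0 : 0 ≤ γ) (hγ1 : γ < 1)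
    (p V : n → ℝ) :
    ∑' t : ℕ, γ ^ t * (p ᵥ* M ^ t ⬝ᵥ (γ • (M *ᵥ V) - V)) = -(p ⬝ᵥ V) := by
  set a : ℕ → ℝ := fun t => γ ^ t * (p ᵥ* M ^ t ⬝ᵥ V)
  have ha : Summable a := summable_discounted hM hγ0 hγ1 p V
  have hterm : ∀ t : ℕ, γ ^ t * (p ᵥ* M ^ t ⬝ᵥ (γ • (M *ᵥ V) - V)) = a (t + 1) - a t := by
    intro t
    simp only [a, dotProduct_sub, dotProduct_smul, dotProduct_mulVec, vecMul_vecMul, pow_succ,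
      smul_eq_mul]
    ring
  rw [tsum_congr hterm, ((summable_nat_add_iff 1).mpr ha).tsum_sub ha, ha.tsum_eq_zero_add]
  simp [a]

theorem tsum_discounted_eq_sum_mul (hM : M ∈ rowStochastic ℝ n) (hγ0 : 0 ≤ γ) (hγ1 : γ < 1)
    (p f : n → ℝ) :
    ∑' t : ℕ, γ ^ t * (p ᵥ* M ^ t ⬝ᵥ f) = ∑ i, (∑' t : ℕ, γ ^ t * (p ᵥ* M ^ t) i) * f i := by
  have hsum (i : n) : Summable fun t : ℕ => γ ^ t * (p ᵥ* M ^ t) i * f i := by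
    simpa only [dotProduct_single, mul_assoc] using
      summable_discounted hM hγ0 hγ1 p (Pi.single i (f i))
  simp only [← tsum_mul_right]
  rw [← Summable.tsum_finsetSum fun i _ => hsum i]
  simp only [dotProduct, mul_sum, mul_assoc]

theorem tsum_discounted_eq_dotProduct (hM : M ∈ rowStochastic ℝ n) (hγ0 : 0 ≤ γ) (hγ1 : γ < 1)
    (p f : n → ℝ) :
    ∑' t : ℕ, γ ^ t * (p ᵥ* M ^ t ⬝ᵥ f) = p ⬝ᵥ fun i => ∑' t : ℕ, γ ^ t * (M ^ t *ᵥ f) i := by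
  have hsum (i : n) : Summable fun t : ℕ => p i * (γ ^ t * (M ^ t *ᵥ f) i) := by
    refine Summable.mul_left _ ?_
    simpa only [← dotProduct_mulVec, single_dotProduct, one_mul] using
      summable_discounted hM hγ0 hγ1 (Pi.single i 1) f
  simp_rw [← dotProduct_mulVec, dotProduct, ← tsum_mul_left]
  rw [← Summable.tsum_finsetSum fun i _ => hsum i]
  simp only [mul_sum, mul_left_comm]

end DiscountedChain

section MDP

variable {S A : Type*} [Fintype S] [Fintype A] [DecidableEq S]
  {P : S → A → S → ℝ} {π : S → A → ℝ} {r : S → A → ℝ} {γ : ℝ}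

def policyReward (π r : S → A → ℝ) (s : S) : ℝ := ∑ a, π s a * r s a

theorem Pmat_mem_rowStochastic (hP0 : ∀ s a s', 0 ≤ P s a s') (hP1 : ∀ s a, ∑ s', P s a s' = 1)
    (hπ0 : ∀ s a, 0 ≤ π s a) (hπ1 : ∀ s, ∑ a, π s a = 1) : Pmat P π ∈ rowStochastic ℝ S := by
  refine mem_rowStochastic_iff_sum.mpr
    ⟨fun s s' => sum_nonneg fun a _ => mul_nonneg (hπ0 s a) (hP0 s a s'), fun s => ?_⟩
  simp only [Pmat]
  rw [sum_comm]
  simp only [← mul_sum, hP1, mul_one, hπ1]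

theorem stateDist_eq_vecMul (P : S → A → S → ℝ) (π : S → A → ℝ) (p0 : S → ℝ) (t : ℕ) :
    stateDist P π p0 t = p0 ᵥ* Pmat P π ^ t := by
  rw [stateDist, ← transpose_pow, mulVec_transpose]

theorem Jret_eq_tsum (P : S → A → S → ℝ) (π r : S → A → ℝ) (p0 : S → ℝ) (γ : ℝ) :
    Jret P π r p0 γ = ∑' t : ℕ, γ ^ t * (p0 ᵥ* Pmat P π ^ t ⬝ᵥ policyReward π r) := by
  simp only [Jret, ← stateDist_eq_vecMul]
  rfl

theorem Jret_eq_dotProduct_Vval (hM : Pmat P π ∈ rowStochastic ℝ S) (hγ0 : 0 ≤ γ) (hγ1 : γ < 1)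
    (p0 : S → ℝ) : Jret P π r p0 γ = p0 ⬝ᵥ Vval P π r γ := by
  have hV : Vval P π r γ = fun s => ∑' t : ℕ, γ ^ t * (Pmat P π ^ t *ᵥ policyReward π r) s := by
    funext s
    have hδ : (fun s' => if s' = s then (1 : ℝ) else 0) = Pi.single s 1 := by
      funext s'
      simp [Pi.single_apply]
    rw [Vval, hδ, Jret_eq_tsum, tsum_discounted_eq_dotProduct hM hγ0 hγ1, single_dotProduct, one_mul]
  rw [hV, Jret_eq_tsum, tsum_discounted_eq_dotProduct hM hγ0 hγ1]

theorem sum_dDist_mul (hM : Pmat P π ∈ rowStochastic ℝ S) (hγ0 : 0 ≤ γ) (hγ1 : γ < 1)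
    (p0 g : S → ℝ) :
    ∑ s, dDist P π p0 γ s * g s = (1 - γ) * ∑' t : ℕ, γ ^ t * (p0 ᵥ* Pmat P π ^ t ⬝ᵥ g) := by
  rw [tsum_discounted_eq_sum_mul hM hγ0 hγ1, mul_sum]
  simp only [dDist, stateDist_eq_vecMul, mul_assoc]

theorem sum_mul_Adv (μ : S → A → ℝ) (hμ1 : ∀ s, ∑ a, μ s a = 1) (s : S) :
    ∑ a, μ s a * Adv P π r γ s a =
      policyReward μ r s + (γ • (Pmat P μ *ᵥ Vval P π r γ) - Vval P π r γ) s := by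
  set V := Vval P π r γ
  have hnext : ∑ a, μ s a * (γ * ∑ s', P s a s' * V s') = γ * (Pmat P μ *ᵥ V) s := by
    simp only [Pmat, mulVec, dotProduct, mul_sum, sum_mul]
    rw [sum_comm]
    exact sum_congr rfl fun _ _ => sum_congr rfl fun _ _ => by ring
  simp only [Adv, Qval, mul_sub, mul_add, sum_sub_distrib, sum_add_distrib]
  rw [hnext, ← sum_mul, hμ1, one_mul, add_sub_assoc]
  rfl

theorem performance_difference {πt : S → A → ℝ} (hM : Pmat P π ∈ rowStochastic ℝ S)
    (hMt : Pmat P πt ∈ rowStochastic ℝ S) (hπt1 : ∀ s, ∑ a, πt s a = 1) (hγ0 : 0 ≤ γ)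
    (hγ1 : γ < 1) (p0 : S → ℝ) :
    (1 - γ) * (Jret P πt r p0 γ - Jret P π r p0 γ) =
      ∑ s, dDist P πt p0 γ s * ∑ a, πt s a * Adv P π r γ s a := by
  set V := Vval P π r γ
  have hAdv : (fun s => ∑ a, πt s a * Adv P π r γ s a) =
      policyReward πt r + (γ • (Pmat P πt *ᵥ V) - V) :=
    funext (sum_mul_Adv πt hπt1)
  rw [sum_dDist_mul hMt hγ0 hγ1 p0 (fun s => ∑ a, πt s a * Adv P π r γ s a), hAdv]
  simp only [dotProduct_add, mul_add]
  rw [(summable_discounted hMt hγ0 hγ1 _ _).tsum_add (summable_discounted hMt hγ0 hγ1 _ _),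
    tsum_discounted_telescope hMt hγ0 hγ1, ← Jret_eq_tsum, Jret_eq_dotProduct_Vval hM hγ0 hγ1]
  ring

end MDP

theorem surrogate_decomposition_general {S A : Type*}
    [Fintype S] [Fintype A] [DecidableEq S]
    (P : S → A → S → ℝ) (π πt : S → A → ℝ) (r : S → A → ℝ) (p0 : S → ℝ) (γ : ℝ)
    (hγ0 : 0 ≤ γ) (hγ1 : γ < 1)
    (hP0 : ∀ s a s', 0 ≤ P s a s') (hP1 : ∀ s a, ∑ s', P s a s' = 1)
    (hπpos : ∀ s a, 0 < π s a) (hπ1 : ∀ s, ∑ a, π s a = 1)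
    (hπt0 : ∀ s a, 0 ≤ πt s a) (hπt1 : ∀ s, ∑ a, πt s a = 1) :
    (1 - γ) * (Jret P πt r p0 γ - Jret P π r p0 γ) =
      ((∑ s, dDist P πt p0 γ s * ∑ a, πt s a * Adv P π r γ s a) -
        ∑ s, dDist P π p0 γ s * ∑ a, πt s a * Adv P π r γ s a) +
      ∑ s, dDist P π p0 γ s * ∑ a, π s a * (πt s a / π s a * Adv P π r γ s a) := by
  have hM := Pmat_mem_rowStochastic hP0 hP1 (fun s a => (hπpos s a).le) hπ1
  have hMt := Pmat_mem_rowStochastic hP0 hP1 hπt0 hπt1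
  have hreweight (s : S) :
      ∑ a, π s a * (πt s a / π s a * Adv P π r γ s a) = ∑ a, πt s a * Adv P π r γ s a :=
    sum_congr rfl fun a _ => by rw [← mul_assoc, mul_div_cancel₀ _ (hπpos s a).ne']
  simp only [hreweight, performance_difference hM hMt hπt1 hγ0 hγ1, sub_add_cancel]

theorem surrogate_decomposition {S A : Type*}
    [Fintype S] [Fintype A] [DecidableEq S]
    (P : S → A → S → ℝ) (π πt : S → A → ℝ) (r : S → A → ℝ) (p0 : S → ℝ) (γ : ℝ)
    (hγ0 : 0 ≤ γ) (hγ1 : γ < 1)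
    (hP0 : ∀ s a s', 0 ≤ P s a s') (hP1 : ∀ s a, ∑ s', P s a s' = 1)
    (hπpos : ∀ s a, 0 < π s a) (hπ1 : ∀ s, ∑ a, π s a = 1)
    (hπt0 : ∀ s a, 0 ≤ πt s a) (hπt1 : ∀ s, ∑ a, πt s a = 1)
    (hp00 : ∀ s, 0 ≤ p0 s) (hp01 : ∑ s, p0 s = 1) :
    (1 - γ) * (Jret P πt r p0 γ - Jret P π r p0 γ) =
      ((∑ s, dDist P πt p0 γ s * ∑ a, πt s a * Adv P π r γ s a) -
        ∑ s, dDist P π p0 γ s * ∑ a, πt s a * Adv P π r γ s a) +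
      ∑ s, dDist P π p0 γ s * ∑ a, π s a * (πt s a / π s a * Adv P π r γ s a) :=
  surrogate_decomposition_general P π πt r p0 γ hγ0 hγ1 hP0 hP1 hπpos hπ1 hπt0 hπt1
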